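/- arXiv:2204.02478 — 4 statements merged into one kernel-verified Lean document; each statement's English description precedes it below -/
import Mathlib

section
/- For θ ∈ ℝ define the 4×4 real matrix W(θ) = [[cos θ · J, sin θ · I_2], [−sin θ · I_2, −cos θ · J]], where J = [[0,1],[−1,0]] and I_2 is the 2×2 identity. Then for all θ, φ ∈ ℝ, det(W(θ) + W(φ)) = 16·cos⁴((θ − φ)/2). -/
/-!
STATEMENT 8: For the 4×4 two-mode Majorana correlation matrix
`W(θ) = [[cos θ · J, sin θ · I₂],[−sin θ · I₂, −cos θ · J]]` with
`J = [[0,1],[−1,0]]`, one has `det (W(θ) + W(φ)) = 16 cos⁴((θ − φ)/2)`.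
-/

open Matrix Real

/-- The 2×2 matrix `J = [[0,1],[-1,0]]`. -/
def Jmat : Matrix (Fin 2) (Fin 2) ℝ := !![0, 1; -1, 0]

/-- The two-mode correlation matrix `W(θ)`. -/
noncomputable def Wmat (θ : ℝ) : Matrix (Fin 2 ⊕ Fin 2) (Fin 2 ⊕ Fin 2) ℝ :=
  Matrix.fromBlocks
    (Real.cos θ • Jmat) (Real.sin θ • (1 : Matrix (Fin 2) (Fin 2) ℝ))
    (-(Real.sin θ • (1 : Matrix (Fin 2) (Fin 2) ℝ))) (-(Real.cos θ • Jmat))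

lemma aux (a b : ℝ) :
    (Matrix.fromBlocks (a • Jmat) (b • (1 : Matrix (Fin 2) (Fin 2) ℝ))
      (-(b • (1 : Matrix (Fin 2) (Fin 2) ℝ))) (-(a • Jmat))).det = (a^2+b^2)^2 := by
  rw [← Matrix.det_submatrix_equiv_self finSumFinEquiv.symm]
  have h : (Matrix.fromBlocks (a • Jmat) (b • (1 : Matrix (Fin 2) (Fin 2) ℝ))
      (-(b • (1 : Matrix (Fin 2) (Fin 2) ℝ))) (-(a • Jmat))).submatrix
      finSumFinEquiv.symm finSumFinEquiv.symm
      = !![0,a,b,0; -a,0,0,b; -b,0,0,-a; 0,-b,a,0] := by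
    ext i j
    fin_cases i <;> fin_cases j <;>
      norm_num [Matrix.fromBlocks, Jmat, finSumFinEquiv, Matrix.one_apply, Fin.addCases, Fin.subNat, Fin.castLT, Fin.mk_zero, Fin.mk_one, Fin.ext_iff]
  rw [h]
  simp [Matrix.det_succ_row_zero, Fin.sum_univ_succ, Fin.succAbove]
  ring

theorem det_Wmat_add_Wmat (θ φ : ℝ) :
    (Wmat θ + Wmat φ).det = 16 * Real.cos ((θ - φ) / 2) ^ 4 := by
  have h : Wmat θ + Wmat φ =
      Matrix.fromBlocks ((Real.cos θ + Real.cos φ) • Jmat)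
        ((Real.sin θ + Real.sin φ) • (1 : Matrix (Fin 2) (Fin 2) ℝ))
        (-((Real.sin θ + Real.sin φ) • (1 : Matrix (Fin 2) (Fin 2) ℝ)))
        (-((Real.cos θ + Real.cos φ) • Jmat)) := by
    simp [Wmat, Matrix.fromBlocks_add, add_smul]
    constructor <;> abel
  rw [h, aux]
  have h2 : Real.cos ((θ - φ) / 2) ^ 2 = 1 / 2 + Real.cos (θ - φ) / 2 := by
    rw [Real.cos_sq]; ring_nf
  have h3 := Real.cos_sub θ φ
  have h4 := Real.sin_sq_add_cos_sq θ
  have h5 := Real.sin_sq_add_cos_sq φ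
  nlinarith [sq_nonneg (Real.cos ((θ-φ)/2))]
end

section
/- Let n ≥ 1 and θ_1,…,θ_n ∈ (0, π/2) be pairwise distinct. Define the 2n×2n real matrices G_c = ⊕_{i=1}^n cos θ_i · J and G_s = ⊕_{i=1}^n sin θ_i · I_2, where J = [[0,1],[−1,0]]. Suppose a 2n×2n real matrix B satisfies G_c·B = B·G_c, G_s·Bᵀ = −B·G_s, and G_s·B = −Bᵀ·G_s. Then there exist b_1,…,b_n ∈ ℝ such that B = ⊕_{i=1}^n b_i · J. -/
/-!
STATEMENT 10: Let `θ₁, …, θₙ ∈ (0, π/2)` be pairwise distinct, and set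
`G_c = ⊕ᵢ cos θᵢ · J` and `G_s = ⊕ᵢ sin θᵢ · I₂`.  If a `2n × 2n` real matrix
`B` satisfies `G_c B = B G_c`, `G_s Bᵀ = −B G_s` and `G_s B = −Bᵀ G_s`, then
`B = ⊕ᵢ bᵢ · J` for some real numbers `bᵢ`.
-/

open Matrix Real

theorem block_structure_of_anticommuting
    {n : ℕ} (hn : 1 ≤ n) (θ : Fin n → ℝ)
    (hθ : ∀ i, θ i ∈ Set.Ioo (0 : ℝ) (π / 2))
    (hθ_distinct : Function.Injective θ)
    (B : Matrix (Fin 2 × Fin n) (Fin 2 × Fin n) ℝ)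
    (hc : (Matrix.blockDiagonal fun i => Real.cos (θ i) • Jmat) * B =
      B * (Matrix.blockDiagonal fun i => Real.cos (θ i) • Jmat))
    (hs₁ : (Matrix.blockDiagonal fun i => Real.sin (θ i) • (1 : Matrix (Fin 2) (Fin 2) ℝ)) * Bᵀ =
      -(B * (Matrix.blockDiagonal fun i => Real.sin (θ i) • (1 : Matrix (Fin 2) (Fin 2) ℝ))))
    (hs₂ : (Matrix.blockDiagonal fun i => Real.sin (θ i) • (1 : Matrix (Fin 2) (Fin 2) ℝ)) * B =
      -(Bᵀ * (Matrix.blockDiagonal fun i => Real.sin (θ i) • (1 : Matrix (Fin 2) (Fin 2) ℝ)))) :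
    ∃ b : Fin n → ℝ, B = Matrix.blockDiagonal fun i => b i • Jmat := by
  -- The block-diagonal of scalar matrices is a diagonal matrix
  have hD : (Matrix.blockDiagonal fun i => Real.sin (θ i) • (1 : Matrix (Fin 2) (Fin 2) ℝ))
      = Matrix.diagonal (fun p : Fin 2 × Fin n => Real.sin (θ p.2)) := by
    ext ⟨a, i⟩ ⟨c, j⟩
    simp only [Matrix.blockDiagonal_apply, Matrix.diagonal_apply, Matrix.smul_apply,
      Matrix.one_apply, Prod.mk.injEq, smul_eq_mul, mul_ite, mul_one, mul_zero]
    by_cases hij : i = j <;> by_cases hac : a = c <;> simp [hij, hac]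
  rw [hD] at hs₁ hs₂
  have hsin : ∀ i, 0 < Real.sin (θ i) := fun i =>
    Real.sin_pos_of_pos_of_lt_pi (hθ i).1 (lt_trans (hθ i).2 (by linarith [Real.pi_pos]))
  -- entrywise identities
  have h2 : ∀ p q, Real.sin (θ p.2) * B p q = -(B q p * Real.sin (θ q.2)) := by
    intro p q
    have := congrFun (congrFun hs₂ p) q
    simpa [Matrix.diagonal_mul, Matrix.mul_diagonal, Matrix.neg_apply,
      Matrix.transpose_apply] using this
  have h1 : ∀ p q, Real.sin (θ p.2) * B q p = -(B p q * Real.sin (θ q.2)) := by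
    intro p q
    have := congrFun (congrFun hs₁ p) q
    simpa [Matrix.diagonal_mul, Matrix.mul_diagonal, Matrix.neg_apply,
      Matrix.transpose_apply] using this
  -- off-diagonal blocks vanish
  have hoff : ∀ p q : Fin 2 × Fin n, p.2 ≠ q.2 → B p q = 0 := by
    intro p q hpq
    set sp := Real.sin (θ p.2) with hsp
    set sq := Real.sin (θ q.2) with hsq
    have hspq : sp ≠ sq := by
      intro h
      apply hpq
      apply hθ_distinct
      apply Real.injOn_sin _ _ h
      · exact ⟨by linarith [(hθ p.2).1, Real.pi_pos], le_of_lt (hθ p.2).2⟩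
      · exact ⟨by linarith [(hθ q.2).1, Real.pi_pos], le_of_lt (hθ q.2).2⟩
    have e2 := h2 p q
    have e1 := h1 p q
    have key : (sp * sp - sq * sq) * B p q = 0 := by
      rw [hsp, hsq]
      linear_combination Real.sin (θ p.2) * e2 - Real.sin (θ q.2) * e1
    have hne : sp * sp - sq * sq ≠ 0 := by
      intro h
      have : (sp - sq) * (sp + sq) = 0 := by ring_nf; linarith
      rcases mul_eq_zero.mp this with h' | h'
      · exact hspq (by linarith)
      · linarith [hsin p.2, hsin q.2]
    exact (mul_eq_zero.mp key).resolve_left hne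
  -- diagonal blocks are antisymmetric
  have hA : ∀ (i : Fin n) (a c : Fin 2), B (a, i) (c, i) = - B (c, i) (a, i) := by
    intro i a c
    have e := h2 (a, i) (c, i)
    have hs := ne_of_gt (hsin i)
    have : Real.sin (θ i) * B (a, i) (c, i) = Real.sin (θ i) * (-B (c, i) (a, i)) := by
      rw [e]; ring
    exact mul_left_cancel₀ hs this
  refine ⟨fun i => B (0, i) (1, i), ?_⟩
  ext ⟨a, i⟩ ⟨c, j⟩
  rw [Matrix.blockDiagonal_apply]
  by_cases hij : i = j
  · subst hij
    simp only [if_pos rfl, Matrix.smul_apply, smul_eq_mul]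
    have hdiag : ∀ a : Fin 2, B (a, i) (a, i) = 0 := by
      intro a; have := hA i a a; linarith
    fin_cases a <;> fin_cases c <;>
      simp [Jmat, hdiag, hA i 1 0] <;> ring_nf <;>
      first
        | exact hdiag _
        | (rw [hA i 1 0]; ring)
  · rw [if_neg hij]
    exact hoff (a, i) (c, j) hij
end

section
/- For integers L ≥ 1 and j ≥ 0, let T^{even}_j be the L×L real matrix with entries (T^{even}_j)_{i,i'} = cos(π(i−i')/2)·(i−i')^{2j} and T^{odd}_j the L×L real matrix with entries (T^{odd}_j)_{i,i'} = sin(π(i−i')/2)·(i−i')^{2j+1}. Then rank(T^{even}_j) ≤ 4j+2 and rank(T^{odd}_j) ≤ 4j+4. -/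
open Real

lemma rank_le_card_of_factor {ι : Type*} [Fintype ι] {L : ℕ}
    (f g : ι → Fin L → ℝ) :
    (Matrix.of fun (i i' : Fin L) => ∑ k, f k i * g k i').rank ≤ Fintype.card ι := by
  have h : (Matrix.of fun (i i' : Fin L) => ∑ k, f k i * g k i') =
      (Matrix.of fun i (k : ι) => f k i) * (Matrix.of fun (k : ι) i' => g k i') := by
    ext i i'
    simp [Matrix.mul_apply]
  rw [h]
  exact (Matrix.rank_mul_le_right _ _).trans (Matrix.rank_le_card_height _)

/-- `(T^even_j)_{i,i'} = cos(π(i−i')/2)·(i−i')^(2j)`. -/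
noncomputable def Teven (L j : ℕ) : Matrix (Fin L) (Fin L) ℝ :=
  Matrix.of fun i i' =>
    Real.cos (π * ((i - i' : ℤ) : ℝ) / 2) * ((i - i' : ℤ) : ℝ) ^ (2 * j)

/-- `(T^odd_j)_{i,i'} = sin(π(i−i')/2)·(i−i')^(2j+1)`. -/
noncomputable def Todd (L j : ℕ) : Matrix (Fin L) (Fin L) ℝ :=
  Matrix.of fun i i' =>
    Real.sin (π * ((i - i' : ℤ) : ℝ) / 2) * ((i - i' : ℤ) : ℝ) ^ (2 * j + 1)

theorem rank_Teven_Todd (L j : ℕ) (hL : 1 ≤ L) :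
    (Teven L j).rank ≤ 4 * j + 2 ∧ (Todd L j).rank ≤ 4 * j + 4 := by
  constructor
  · -- even case
    have key : Teven L j =
        Matrix.of fun (i i' : Fin L) => ∑ k : Fin 2 × Fin (2 * j + 1),
          ((if k.1 = 0 then Real.cos (π * (i : ℝ) / 2) else Real.sin (π * (i : ℝ) / 2))
            * (i : ℝ) ^ (k.2 : ℕ))
          * ((if k.1 = 0 then Real.cos (π * (i' : ℝ) / 2) else Real.sin (π * (i' : ℝ) / 2))
            * ((-1 : ℝ) ^ ((k.2 : ℕ) + 2 * j) * (i' : ℝ) ^ (2 * j - (k.2 : ℕ))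
              * ((2 * j).choose (k.2 : ℕ)))) := by
      ext i i'
      simp only [Teven, Matrix.of_apply]
      have hc : ((i - i' : ℤ) : ℝ) = (i : ℝ) - (i' : ℝ) := by push_cast; ring
      rw [hc]
      rw [Fintype.sum_prod_type, Fin.sum_univ_two]
      simp only [show ((0 : Fin 2) = 0) = True by simp, show ((1 : Fin 2) = 0) = False by simp,
        if_true, if_false]
      rw [show π * ((i : ℝ) - (i' : ℝ)) / 2 = π * (i : ℝ) / 2 - π * (i' : ℝ) / 2 by ring,
        Real.cos_sub, sub_pow, Finset.sum_range, add_mul]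
      rw [Finset.mul_sum, Finset.mul_sum, ← Finset.sum_add_distrib, ← Finset.sum_add_distrib]
      exact Finset.sum_congr rfl fun m _ => by ring
    rw [key]
    have h := rank_le_card_of_factor (ι := Fin 2 × Fin (2 * j + 1)) (L := L)
      (fun k i => (if k.1 = 0 then Real.cos (π * (i : ℝ) / 2) else Real.sin (π * (i : ℝ) / 2))
        * (i : ℝ) ^ (k.2 : ℕ))
      (fun k i' => (if k.1 = 0 then Real.cos (π * (i' : ℝ) / 2) else Real.sin (π * (i' : ℝ) / 2))
        * ((-1 : ℝ) ^ ((k.2 : ℕ) + 2 * j) * (i' : ℝ) ^ (2 * j - (k.2 : ℕ))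
          * ((2 * j).choose (k.2 : ℕ))))
    refine h.trans_eq ?_
    simp [Fintype.card_prod]
    ring
  · -- odd case
    have key : Todd L j =
        Matrix.of fun (i i' : Fin L) => ∑ k : Fin 2 × Fin (2 * j + 2),
          ((if k.1 = 0 then Real.sin (π * (i : ℝ) / 2) else -Real.cos (π * (i : ℝ) / 2))
            * (i : ℝ) ^ (k.2 : ℕ))
          * ((if k.1 = 0 then Real.cos (π * (i' : ℝ) / 2) else Real.sin (π * (i' : ℝ) / 2))
            * ((-1 : ℝ) ^ ((k.2 : ℕ) + (2 * j + 1)) * (i' : ℝ) ^ (2 * j + 1 - (k.2 : ℕ))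
              * ((2 * j + 1).choose (k.2 : ℕ)))) := by
      ext i i'
      simp only [Todd, Matrix.of_apply]
      have hc : ((i - i' : ℤ) : ℝ) = (i : ℝ) - (i' : ℝ) := by push_cast; ring
      rw [hc]
      rw [Fintype.sum_prod_type, Fin.sum_univ_two]
      simp only [show ((0 : Fin 2) = 0) = True by simp, show ((1 : Fin 2) = 0) = False by simp,
        if_true, if_false]
      rw [show π * ((i : ℝ) - (i' : ℝ)) / 2 = π * (i : ℝ) / 2 - π * (i' : ℝ) / 2 by ring,
        Real.sin_sub, sub_pow, show 2 * j + 1 + 1 = 2 * j + 2 from rfl,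
        Finset.sum_range, sub_mul]
      rw [Finset.mul_sum, Finset.mul_sum, ← Finset.sum_sub_distrib, ← Finset.sum_add_distrib]
      exact Finset.sum_congr rfl fun m _ => by ring
    rw [key]
    have h := rank_le_card_of_factor (ι := Fin 2 × Fin (2 * j + 2)) (L := L)
      (fun k i => (if k.1 = 0 then Real.sin (π * (i : ℝ) / 2) else -Real.cos (π * (i : ℝ) / 2))
        * (i : ℝ) ^ (k.2 : ℕ))
      (fun k i' => (if k.1 = 0 then Real.cos (π * (i' : ℝ) / 2) else Real.sin (π * (i' : ℝ) / 2))
        * ((-1 : ℝ) ^ ((k.2 : ℕ) + (2 * j + 1)) * (i' : ℝ) ^ (2 * j + 1 - (k.2 : ℕ))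
          * ((2 * j + 1).choose (k.2 : ℕ))))
    refine h.trans_eq ?_
    simp [Fintype.card_prod]
    ring
end

section
/- For integers L ≥ 1 and j ≥ 0, let T^{even}_j be the L×L real matrix with entries (T^{even}_j)_{i,i'} = cos(π(i−i')/2)·(i−i')^{2j} and T^{odd}_j the L×L real matrix with entries (T^{odd}_j)_{i,i'} = sin(π(i−i')/2)·(i−i')^{2j+1}. Then the trace norms satisfy ‖T^{even}_j‖_1 ≤ √((4j+2)/(4j+1)) · L^{2j+1} and ‖T^{odd}_j‖_1 ≤ √((4j+4)/(4j+3)) · L^{2j+2}. -/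
/-!
STATEMENT 16: The `L × L` Toeplitz matrices
`(T^even_j)_{i,i'} = cos(π(i−i')/2)(i−i')^{2j}` and
`(T^odd_j)_{i,i'} = sin(π(i−i')/2)(i−i')^{2j+1}` satisfy the trace-norm bounds
`‖T^even_j‖₁ ≤ √((4j+2)/(4j+1)) L^{2j+1}` and
`‖T^odd_j‖₁ ≤ √((4j+4)/(4j+3)) L^{2j+2}`, where the trace norm of a real
square matrix is the sum of its singular values (square roots of the
eigenvalues of `MᴴM`).
-/

open scoped BigOperators
open Real

/-- The trace norm (Schatten 1-norm) of a real square matrix: the sum of its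
singular values, i.e. of the square roots of the eigenvalues of `MᴴM`. -/
noncomputable def traceNorm {L : ℕ} (M : Matrix (Fin L) (Fin L) ℝ) : ℝ :=
  ∑ i, Real.sqrt ((show (M.transpose * M).IsHermitian by simpa using Matrix.isHermitian_conjTranspose_mul_self M).eigenvalues i)

/-!
Both matrices have low rank: `cos (a - b)` and `sin (a - b)` are sums of two products of a
function of `a` and a function of `b`, and `(x - y) ^ d` expands binomially into `d + 1` such
products, so the kernel `cos (a i - b i') * (x i - y i') ^ d` has rank at most `2 (d + 1)`.
Cauchy–Schwarz over the nonzero eigenvalues of `Mᵀ M` gives `‖M‖₁ ≤ √(rank M) ‖M‖₂`, and the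
squared entries are bounded by `(i - k) ^ (2m)`. Summing these over an `L × L` square gives at most
`L ^ (2m + 2) / (2m + 1)`: for odd `q`, `2 q x ^ (q - 1) ≤ (x + 1) ^ q - (x - 1) ^ q` telescopes
along each row, and the four boundary terms are controlled by `a ^ q + b ^ q ≤ (a + b) ^ q`.
-/

namespace Matrix

variable {m n : Type*} [Fintype n]

theorem rank_add_le {K : Type*} [Field K] (A B : Matrix m n K) :
    (A + B).rank ≤ A.rank + B.rank := by
  rw [rank, mulVecLin_add]
  exact (Submodule.finrank_mono (LinearMap.range_add_le _ _)).trans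
    (Submodule.finrank_add_le_finrank_add_finrank _ _)

theorem rank_of_mul_mul_sub_pow_le {K : Type*} [Field K] (f x : m → K) (g y : n → K) (d : ℕ) :
    (of fun i i' => f i * g i' * (x i - y i') ^ d).rank ≤ d + 1 := by
  have hfactor : (of fun i i' => f i * g i' * (x i - y i') ^ d) =
      (of fun i (k : Fin (d + 1)) => f i * x i ^ (k : ℕ) * d.choose k) *
        of fun (k : Fin (d + 1)) i' => g i' * (-y i') ^ (d - k) := by
    ext i i'
    rw [of_apply, mul_apply, sub_eq_add_neg, add_pow, Finset.mul_sum, ← Fin.sum_univ_eq_sum_range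
      (fun k => f i * g i' * (x i ^ k * (-y i') ^ (d - k) * d.choose k))]
    exact Finset.sum_congr rfl fun k _ => by simp only [of_apply]; ring
  rw [hfactor]
  exact (rank_mul_le_left _ _).trans ((rank_le_card_width _).trans (Fintype.card_fin _).le)

theorem rank_of_cos_sub_mul_sub_pow_le (a x : m → ℝ) (b y : n → ℝ) (d : ℕ) :
    (of fun i i' => cos (a i - b i') * (x i - y i') ^ d).rank ≤ 2 * (d + 1) := by
  have hsplit : (of fun i i' => cos (a i - b i') * (x i - y i') ^ d) =
      (of fun i i' => cos (a i) * cos (b i') * (x i - y i') ^ d) +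
        of fun i i' => sin (a i) * sin (b i') * (x i - y i') ^ d := by
    ext i i'
    simp only [of_apply, add_apply, cos_sub]
    ring
  rw [hsplit]
  grw [rank_add_le, rank_of_mul_mul_sub_pow_le, rank_of_mul_mul_sub_pow_le]
  omega

theorem rank_of_sin_sub_mul_sub_pow_le (a x : m → ℝ) (b y : n → ℝ) (d : ℕ) :
    (of fun i i' => sin (a i - b i') * (x i - y i') ^ d).rank ≤ 2 * (d + 1) := by
  have hsplit : (of fun i i' => sin (a i - b i') * (x i - y i') ^ d) =
      (of fun i i' => sin (a i) * cos (b i') * (x i - y i') ^ d) +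
        of fun i i' => -cos (a i) * sin (b i') * (x i - y i') ^ d := by
    ext i i'
    simp only [of_apply, add_apply, sin_sub]
    ring
  rw [hsplit]
  grw [rank_add_le, rank_of_mul_mul_sub_pow_le, rank_of_mul_mul_sub_pow_le]
  omega

theorem PosSemidef.sum_sqrt_eigenvalues_le [DecidableEq n] {A : Matrix n n ℝ} (hA : A.PosSemidef) :
    ∑ i, √(hA.isHermitian.eigenvalues i) ≤ √(A.rank * A.trace) := by
  set μ := hA.isHermitian.eigenvalues
  set s := Finset.univ.filter fun i => μ i ≠ 0
  have hcard : s.card = A.rank := by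
    rw [hA.isHermitian.rank_eq_card_non_zero_eigs, Fintype.card_subtype]
  have hsupport : ∑ i, √(μ i) = ∑ i ∈ s, √(μ i) :=
    (Finset.sum_filter_of_ne (p := fun i => μ i ≠ 0) fun i _ h hμ => h (by simp [hμ])).symm
  have htrace : ∑ i ∈ s, μ i = A.trace := by
    rw [Finset.sum_filter_of_ne fun i _ h => h, hA.isHermitian.trace_eq_sum_eigenvalues]
    simp [μ]
  rw [hsupport, ← Real.sqrt_sq (Finset.sum_nonneg fun i _ => Real.sqrt_nonneg (μ i))]
  refine Real.sqrt_le_sqrt ?_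
  calc (∑ i ∈ s, √(μ i)) ^ 2 ≤ s.card * ∑ i ∈ s, √(μ i) ^ 2 := sq_sum_le_card_mul_sum_sq
    _ = A.rank * A.trace := by
      rw [hcard, ← htrace]
      simp only [μ, Real.sq_sqrt (hA.eigenvalues_nonneg _)]

theorem trace_transpose_mul_self [Fintype m] (M : Matrix m n ℝ) :
    (Mᵀ * M).trace = ∑ i, ∑ k, M i k ^ 2 := by
  simp only [trace, diag, mul_apply, transpose_apply, sq]
  exact Finset.sum_comm

end Matrix

open Matrix

theorem rank_Teven_le (L j : ℕ) : (Teven L j).rank ≤ 4 * j + 2 := by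
  have h : Teven L j = of fun (i i' : Fin L) =>
      cos (π * (i : ℕ) / 2 - π * (i' : ℕ) / 2) * (((i : ℕ) : ℝ) - (i' : ℕ)) ^ (2 * j) := by
    ext i i'
    simp only [Teven, of_apply, Int.cast_sub, Int.cast_natCast, mul_sub, sub_div]
  rw [h]
  grw [rank_of_cos_sub_mul_sub_pow_le]
  omega

theorem rank_Todd_le (L j : ℕ) : (Todd L j).rank ≤ 4 * j + 4 := by
  have h : Todd L j = of fun (i i' : Fin L) =>
      sin (π * (i : ℕ) / 2 - π * (i' : ℕ) / 2) * (((i : ℕ) : ℝ) - (i' : ℕ)) ^ (2 * j + 1) := by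
    ext i i'
    simp only [Todd, of_apply, Int.cast_sub, Int.cast_natCast, mul_sub, sub_div]
  rw [h]
  grw [rank_of_sin_sub_mul_sub_pow_le]
  omega

theorem traceNorm_le_sqrt_rank_mul_sum_sq {L : ℕ} (M : Matrix (Fin L) (Fin L) ℝ) :
    traceNorm M ≤ √(M.rank * ∑ i, ∑ k, M i k ^ 2) := by
  have hA : (Mᵀ * M).PosSemidef := by
    simpa using posSemidef_conjTranspose_mul_self M
  rw [← trace_transpose_mul_self, ← rank_transpose_mul_self M]
  exact hA.sum_sqrt_eigenvalues_le

theorem two_mul_mul_pow_le_add_one_pow_sub_sub_one_pow (m : ℕ) (x : ℝ) :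
    2 * (2 * m + 1) * x ^ (2 * m) ≤ (x + 1) ^ (2 * m + 1) - (x - 1) ^ (2 * m + 1) := by
  set q := 2 * m + 1 with hq
  have hdiff : (x + 1) ^ q - (x - 1) ^ q =
      ∑ k ∈ Finset.range (q + 1), x ^ k * (1 - (-1) ^ (q - k)) * q.choose k := by
    rw [sub_eq_add_neg x, add_pow, add_pow, ← Finset.sum_sub_distrib]
    exact Finset.sum_congr rfl fun k _ => by ring
  -- a term with `k` odd has `q - k` even and vanishes; one with `k` even is a nonnegative power
  have hterm : ∀ k ∈ Finset.range (q + 1), 0 ≤ x ^ k * (1 - (-1) ^ (q - k)) * q.choose k := by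
    intro k hk
    refine mul_nonneg ?_ (Nat.cast_nonneg _)
    rcases Nat.even_or_odd k with hk | hk
    · rcases neg_one_pow_eq_or ℝ (q - k) with h | h <;> rw [h] <;> nlinarith [hk.pow_nonneg x]
    · rw [(Nat.Odd.sub_odd (odd_two_mul_add_one m) hk).neg_one_pow, sub_self, mul_zero]
  have hlead := Finset.single_le_sum hterm (Finset.mem_range.mpr (by omega : 2 * m < q + 1))
  rw [hdiff]
  refine le_trans (le_of_eq ?_) hlead
  rw [show q - 2 * m = 1 by omega, hq, Nat.choose_succ_self_right]
  push_cast
  ring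

theorem two_mul_mul_sum_range_sub_pow_le (m L : ℕ) (c : ℝ) :
    2 * (2 * m + 1) * ∑ k ∈ Finset.range L, (c - k) ^ (2 * m) ≤
      (c + 1) ^ (2 * m + 1) + c ^ (2 * m + 1) - (c - L + 1) ^ (2 * m + 1) -
        (c - L) ^ (2 * m + 1) := by
  induction L with
  | zero => simp
  | succ L ih =>
    have hstep := two_mul_mul_pow_le_add_one_pow_sub_sub_one_pow m (c - L)
    rw [Finset.sum_range_succ, mul_add]
    push_cast
    rw [show c - (L + 1 : ℝ) + 1 = c - L by ring, show c - (L + 1 : ℝ) = c - L - 1 by ring]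
    linarith

theorem mul_sum_range_sub_pow_le (m L : ℕ) {c : ℝ} (hc : 0 ≤ c) (hcL : c + 1 ≤ L) :
    (2 * m + 1) * ∑ k ∈ Finset.range L, (c - k) ^ (2 * m) ≤ (L : ℝ) ^ (2 * m + 1) := by
  have hodd : Odd (2 * m + 1) := odd_two_mul_add_one m
  have h₁ := pow_add_pow_le (x := c + 1) (y := -(c - L + 1)) (by linarith) (by linarith)
    (by omega : 2 * m + 1 ≠ 0)
  have h₂ := pow_add_pow_le (x := c) (y := -(c - L)) hc (by linarith) (by omega : 2 * m + 1 ≠ 0)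
  rw [hodd.neg_pow, show c + 1 + -(c - L + 1) = L by ring] at h₁
  rw [hodd.neg_pow, show c + -(c - L) = L by ring] at h₂
  linarith [two_mul_mul_sum_range_sub_pow_le m L c]

theorem mul_sum_sum_sub_pow_le (m L : ℕ) :
    (2 * m + 1) * ∑ i : Fin L, ∑ k : Fin L, (((i : ℕ) : ℝ) - (k : ℕ)) ^ (2 * m) ≤
      (L : ℝ) ^ (2 * m + 2) := by
  rw [Finset.mul_sum]
  calc _ ≤ ∑ _i : Fin L, (L : ℝ) ^ (2 * m + 1) := Finset.sum_le_sum fun i _ => by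
          rw [Fin.sum_univ_eq_sum_range (fun k => (((i : ℕ) : ℝ) - k) ^ (2 * m)) L]
          exact mul_sum_range_sub_pow_le m L (Nat.cast_nonneg _) (by exact_mod_cast i.is_lt)
    _ = (L : ℝ) ^ (2 * m + 2) := by
      rw [Finset.sum_const, Finset.card_univ, Fintype.card_fin, nsmul_eq_mul, ← pow_succ']

theorem traceNorm_le_of_rank_le_of_sq_le {L r m : ℕ} (M : Matrix (Fin L) (Fin L) ℝ)
    (hr : M.rank ≤ r) (hM : ∀ i k, M i k ^ 2 ≤ (((i : ℕ) : ℝ) - (k : ℕ)) ^ (2 * m)) :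
    traceNorm M ≤ √(r / (2 * m + 1)) * (L : ℝ) ^ (m + 1) := by
  have hsum : ∑ i, ∑ k, M i k ^ 2 ≤ (L : ℝ) ^ (2 * m + 2) / (2 * m + 1) := by
    rw [le_div_iff₀ (by positivity), mul_comm]
    refine le_trans ?_ (mul_sum_sum_sub_pow_le m L)
    gcongr with i _ k _
    exact hM i k
  calc traceNorm M ≤ √(M.rank * ∑ i, ∑ k, M i k ^ 2) := traceNorm_le_sqrt_rank_mul_sum_sq M
    _ ≤ √(r * ((L : ℝ) ^ (2 * m + 2) / (2 * m + 1))) := by gcongr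
    _ = √(r / (2 * m + 1)) * (L : ℝ) ^ (m + 1) := by
      rw [← Real.sqrt_sq (by positivity : (0 : ℝ) ≤ (L : ℝ) ^ (m + 1)), ← Real.sqrt_mul
        (by positivity)]
      congr 1
      ring

theorem sq_mul_pow_le_pow_two_mul {c : ℝ} (hc : c ^ 2 ≤ 1) (y : ℝ) (n : ℕ) :
    (c * y ^ n) ^ 2 ≤ y ^ (2 * n) := by
  rw [mul_pow, ← pow_mul, mul_comm n 2]
  exact mul_le_of_le_one_left ((even_two_mul n).pow_nonneg y) hc

theorem traceNorm_Teven_Todd_general (L j : ℕ) :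
    traceNorm (Teven L j) ≤
        Real.sqrt ((4 * j + 2) / (4 * j + 1)) * (L : ℝ) ^ (2 * j + 1) ∧
      traceNorm (Todd L j) ≤
        Real.sqrt ((4 * j + 4) / (4 * j + 3)) * (L : ℝ) ^ (2 * j + 2) := by
  constructor
  · convert traceNorm_le_of_rank_le_of_sq_le (m := 2 * j) (Teven L j) (rank_Teven_le L j)
      fun i k => ?_ using 3
    · push_cast; ring
    · simpa [Teven] using sq_mul_pow_le_pow_two_mul (cos_sq_le_one _) _ (2 * j)
  · convert traceNorm_le_of_rank_le_of_sq_le (m := 2 * j + 1) (Todd L j) (rank_Todd_le L j)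
      fun i k => ?_ using 3
    · push_cast; ring
    · simpa [Todd] using sq_mul_pow_le_pow_two_mul (sin_sq_le_one _) _ (2 * j + 1)

theorem traceNorm_Teven_Todd (L j : ℕ) (hL : 1 ≤ L) :
    traceNorm (Teven L j) ≤
        Real.sqrt ((4 * j + 2) / (4 * j + 1)) * (L : ℝ) ^ (2 * j + 1) ∧
      traceNorm (Todd L j) ≤
        Real.sqrt ((4 * j + 4) / (4 * j + 3)) * (L : ℝ) ^ (2 * j + 2) :=
  traceNorm_Teven_Todd_general L j
end
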